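/- Let p be a prime and k, s_1, s_2 ≥ 1 integers. Then in ℚ_p: (p^k)^{s_1+s_2} · ∑_{0<n_1<n_2<p^k, v_p(n_1)=v_p(n_2)} n_1^{−s_1} n_2^{−s_2} = p^{s_1+s_2} · ∑_{l_1,l_2 ≥ 0} ∑_{u=1}^{l_1+l_2+2} ((p^{(u+s_1+s_2)k} − 1)/(p^{u+s_1+s_2} − 1)) · p^{l_1+l_2} · binom(−s_1,l_1) · binom(−s_2,l_2) · ( 𝔹_u^{l_2,l_1} · H_p(s_1+l_1) · H_p(s_2+l_2) + 𝔹_u^{l_1+l_2} · H_p(s_2+l_2, s_1+l_1) ), the family being summable in ℚ_p. -/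

import Mathlib

/-!
Writing `nᵢ = p^j mᵢ` with `p ∤ mᵢ`, the part of the sum with `v_p(n₁) = v_p(n₂) = j` is
`p^{-j(s₁+s₂)}` times the depth-two sum over the `p`-units below `p^{k-j}`. Write such a unit as
`m = p n + a` with `0 < a < p` and expand `(p n + a)^{-s} = ∑_l binom(-s,l) p^l n^l a^{-s-l}`,
which converges `p`-adically because `|p n / a|_p < 1`. Now `m₁ < m₂` means either `n₁ < n₂`, or
`n₁ = n₂` and `a₁ < a₂`: summing over the digits `a` produces `H_p(s₁+l₁) H_p(s₂+l₂)` in the first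
case and `H_p(s₂+l₂, s₁+l₁)` in the second, and summing over `n` produces power sums, which
Faulhaber's formula turns into polynomials in `p^{k-j-1}`. The sum over `j` is then a geometric
series in `p^{u+s₁+s₂}`.
-/

open Finset

/-- The generalized binomial coefficient `binom(−s,l) = (−1)^l · C(s+l−1, l) ∈ ℤ`. -/
def negBinom (s l : ℕ) : ℤ := (-1) ^ l * (Nat.choose (s + l - 1) l : ℤ)

/-- The Faulhaber coefficient `𝔹_u^l = (1/(l+1))·C(l+1,u)·B_{l+1−u} ∈ ℚ`, with `B_1 = −1/2`. -/
noncomputable def faulhaberB (u l : ℕ) : ℚ :=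
  (1 / ((l : ℚ) + 1)) * (Nat.choose (l + 1) u : ℚ) * bernoulli (l + 1 - u)

/-- The depth-two Faulhaber coefficient `𝔹_u^{l_2,l_1} = ∑_{k_1=1}^{l_1+1} 𝔹_{k_1}^{l_1}·𝔹_u^{k_1+l_2}`,
so that `∑_{0≤n_1<n_2<N} n_1^{l_1} n_2^{l_2} = ∑_{u=1}^{l_1+l_2+2} 𝔹_u^{l_2,l_1}·N^u`. -/
noncomputable def faulhaberB2 (u l₂ l₁ : ℕ) : ℚ :=
  ∑ k₁ ∈ Finset.Icc 1 (l₁ + 1), faulhaberB k₁ l₁ * faulhaberB u (k₁ + l₂)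

/-- The depth-one multiple harmonic sum `H_N(s) = ∑_{0<n<N} 1/n^s`, viewed in `ℚ_p`. -/
noncomputable def H1 (p : ℕ) [Fact p.Prime] (N s : ℕ) : ℚ_[p] :=
  ∑ n ∈ Finset.Ioo 0 N, 1 / (n : ℚ_[p]) ^ s

/-- The depth-two multiple harmonic sum `H_N(s_2,s_1) = ∑_{0<n_1<n_2<N} 1/(n_1^{s_1} n_2^{s_2})`,
viewed in `ℚ_p`. -/
noncomputable def H2 (p : ℕ) [Fact p.Prime] (N s₁ s₂ : ℕ) : ℚ_[p] :=
  ∑ n₂ ∈ Finset.Ioo 0 N, ∑ n₁ ∈ Finset.Ioo 0 n₂, 1 / ((n₁ : ℚ_[p]) ^ s₁ * (n₂ : ℚ_[p]) ^ s₂)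

section NegBinomSeries

variable {𝕜 : Type*} [NormedField 𝕜]

theorem hasSum_negBinom_mul_pow (s : ℕ) {x : 𝕜} (hx : ‖x‖ < 1) :
    HasSum (fun l => (negBinom s l : 𝕜) * x ^ l) ((1 + x) ^ s)⁻¹ := by
  cases s with
  | zero =>
    -- the truncated `0 + l - 1` still gives `binom(0, l) = 0` for `l ≥ 1`
    convert hasSum_single (f := fun l => (negBinom 0 l : 𝕜) * x ^ l) 0 fun l hl => ?_ using 1
    · simp [negBinom]
    · simp [negBinom, Nat.choose_eq_zero_of_lt (Nat.sub_one_lt hl)]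
  | succ t =>
    convert hasSum_choose_mul_geometric_of_norm_lt_one t (r := -x) (by rwa [norm_neg])
      using 1
    · ext l
      rw [negBinom, neg_pow, Nat.add_right_comm, Nat.add_sub_cancel, add_comm t l,
        ← Nat.choose_symm_add]
      push_cast
      ring
    · simp [one_div]

theorem hasSum_negBinom_mul_pow_div_pow (s : ℕ) {a y : 𝕜} (h : ‖y‖ < ‖a‖) :
    HasSum (fun l => (negBinom s l : 𝕜) * y ^ l / a ^ (s + l)) ((a + y) ^ s)⁻¹ := by
  have ha : a ≠ 0 := norm_pos_iff.mp ((norm_nonneg y).trans_lt h)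
  have hx : ‖y / a‖ < 1 := by rwa [norm_div, div_lt_one (norm_pos_iff.mpr ha)]
  have hfactor : ((a + y) ^ s)⁻¹ = (a ^ s)⁻¹ * ((1 + y / a) ^ s)⁻¹ := by
    rw [← mul_inv, ← mul_pow, mul_add, mul_one, mul_div_cancel₀ y ha]
  have hterm : (fun l => (negBinom s l : 𝕜) * y ^ l / a ^ (s + l))
      = fun l => (a ^ s)⁻¹ * ((negBinom s l : 𝕜) * (y / a) ^ l) := by
    funext l
    rw [div_pow, pow_add]
    field_simp
  rw [hterm, hfactor]
  exact (hasSum_negBinom_mul_pow s hx).mul_left _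

theorem norm_negBinom_mul_pow_div_pow_le [IsUltrametricDist 𝕜] (s l : ℕ) {a : 𝕜}
    (ha : ‖a‖ = 1) (y : 𝕜) : ‖(negBinom s l : 𝕜) * y ^ l / a ^ (s + l)‖ ≤ ‖y‖ ^ l := by
  rw [norm_div, norm_mul, norm_pow, norm_pow, ha, one_pow, div_one]
  exact mul_le_of_le_one_left (by positivity) (IsUltrametricDist.norm_intCast_le_one 𝕜 _)

end NegBinomSeries

section Faulhaber

theorem faulhaberB_eq_zero_of_lt {u l : ℕ} (h : l + 1 < u) : faulhaberB u l = 0 := by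
  simp [faulhaberB, Nat.choose_eq_zero_of_lt h]

theorem sum_range_pow_eq_sum_faulhaberB_rat (N l : ℕ) :
    ∑ n ∈ range N, (n : ℚ) ^ l = ∑ u ∈ Icc 1 (l + 1), faulhaberB u l * (N : ℚ) ^ u := by
  rw [sum_range_pow]
  refine sum_nbij' (l + 1 - ·) (l + 1 - ·) ?_ ?_ ?_ ?_ fun i hi => ?_
  any_goals (simp only [mem_range, mem_Icc]; intros; omega)
  have hi : i ≤ l + 1 := (mem_range.mp hi).le
  rw [faulhaberB, Nat.sub_sub_self hi, Nat.choose_symm hi]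
  ring

variable {K : Type*} [Field K] [CharZero K]

theorem sum_range_pow_eq_sum_faulhaberB (N : ℕ) {l L : ℕ} (hL : l + 1 ≤ L) :
    ∑ n ∈ range N, (n : K) ^ l = ∑ u ∈ Icc 1 L, (faulhaberB u l : K) * (N : K) ^ u := by
  have hQ := congrArg (Rat.cast : ℚ → K) (sum_range_pow_eq_sum_faulhaberB_rat N l)
  push_cast at hQ
  rw [hQ]
  refine sum_subset (Icc_subset_Icc_right hL) fun u hu hu' => ?_
  simp only [mem_Icc, not_and, not_le] at hu hu'
  rw [faulhaberB_eq_zero_of_lt (hu' hu.1), Rat.cast_zero, zero_mul]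

theorem sum_range_sum_range_pow_mul_pow_eq_sum_faulhaberB2 (N l₁ l₂ : ℕ) :
    ∑ n₂ ∈ range N, ∑ n₁ ∈ range n₂, (n₁ : K) ^ l₁ * (n₂ : K) ^ l₂
      = ∑ u ∈ Icc 1 (l₁ + l₂ + 2), (faulhaberB2 u l₂ l₁ : K) * (N : K) ^ u := by
  simp_rw [← sum_mul, sum_range_pow_eq_sum_faulhaberB _ le_rfl, sum_mul, mul_assoc, ← pow_add]
  rw [sum_comm]
  simp_rw [← mul_sum]
  rw [sum_congr rfl fun k₁ hk₁ => by
    rw [sum_range_pow_eq_sum_faulhaberB N (L := l₁ + l₂ + 2)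
      (by have := (mem_Icc.mp hk₁).2; omega), mul_sum], sum_comm]
  refine sum_congr rfl fun u _ => ?_
  simp only [faulhaberB2, Rat.cast_sum, Rat.cast_mul, sum_mul, mul_assoc]

end Faulhaber

section Digits

variable {M : Type*} [AddCommMonoid M] (p : ℕ)

theorem sum_range_mul_eq_sum_sum (f : ℕ → M) (N : ℕ) :
    ∑ m ∈ range (p * N), f m = ∑ n ∈ range N, ∑ a ∈ range p, f (p * n + a) := by
  induction N with
  | zero => simp
  | succ N ih => rw [mul_add_one, sum_range_add, ih, sum_range_succ]

theorem sum_filter_not_dvd_Ioo_eq_sum_range (g : ℕ → M) (N : ℕ) :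
    ∑ m ∈ (Ioo 0 N).filter (¬ p ∣ ·), g m = ∑ m ∈ range N, if p ∣ m then 0 else g m := by
  rw [sum_ite, sum_const_zero, zero_add]
  refine sum_congr (ext fun m => ?_) fun _ _ => rfl
  simp only [mem_filter, mem_Ioo, mem_range]
  constructor
  · exact fun h => ⟨h.1.2, h.2⟩
  · exact fun h => ⟨⟨Nat.pos_of_ne_zero fun h0 => h.2 (h0 ▸ dvd_zero p), h.1⟩, h.2⟩

theorem sum_range_ite_dvd_mul_add {b : ℕ} (hb : b ≤ p) (g : ℕ → M) (n : ℕ) :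
    ∑ a ∈ range b, (if p ∣ p * n + a then 0 else g (p * n + a))
      = ∑ a ∈ Ioo 0 b, g (p * n + a) := by
  rw [sum_ite, sum_const_zero, zero_add]
  refine sum_congr (ext fun a => ?_) fun _ _ => rfl
  simp only [mem_filter, mem_Ioo, mem_range, Nat.dvd_add_right (dvd_mul_right p n)]
  constructor
  · exact fun ⟨hab, hpa⟩ => ⟨Nat.pos_of_ne_zero fun h0 => hpa (h0 ▸ dvd_zero p), hab⟩
  · exact fun ⟨ha, hab⟩ => ⟨hab, Nat.not_dvd_of_pos_of_lt ha (by omega)⟩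

theorem sum_filter_not_dvd_Ioo_mul_add {b : ℕ} (hb : b ≤ p) (g : ℕ → M) (N : ℕ) :
    ∑ m ∈ (Ioo 0 (p * N + b)).filter (¬ p ∣ ·), g m
      = ∑ n ∈ range N, ∑ a ∈ Ioo 0 p, g (p * n + a) + ∑ a ∈ Ioo 0 b, g (p * N + a) := by
  rw [sum_filter_not_dvd_Ioo_eq_sum_range, sum_range_add, sum_range_mul_eq_sum_sum,
    sum_range_ite_dvd_mul_add p hb]
  simp only [sum_range_ite_dvd_mul_add p le_rfl]

theorem sum_filter_not_dvd_Ioo_mul_sum_filter_not_dvd (g : ℕ → ℕ → M) (N : ℕ) :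
    ∑ m₂ ∈ (Ioo 0 (p * N)).filter (¬ p ∣ ·), ∑ m₁ ∈ (Ioo 0 m₂).filter (¬ p ∣ ·), g m₁ m₂
      = ∑ n₂ ∈ range N,
          (∑ n₁ ∈ range n₂, ∑ a₁ ∈ Ioo 0 p, ∑ a₂ ∈ Ioo 0 p, g (p * n₁ + a₁) (p * n₂ + a₂)
            + ∑ a₂ ∈ Ioo 0 p, ∑ a₁ ∈ Ioo 0 a₂, g (p * n₂ + a₁) (p * n₂ + a₂)) := by
  have h := sum_filter_not_dvd_Ioo_mul_add p (Nat.zero_le p)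
    (fun m₂ => ∑ m₁ ∈ (Ioo 0 m₂).filter (¬ p ∣ ·), g m₁ m₂) N
  simp only [add_zero, Ioo_self, sum_empty] at h
  rw [h]
  refine sum_congr rfl fun n₂ _ => ?_
  rw [sum_congr rfl fun a₂ ha₂ => sum_filter_not_dvd_Ioo_mul_add p (mem_Ioo.mp ha₂).2.le _ n₂,
    sum_add_distrib, sum_comm]
  exact congrArg (· + _) (sum_congr rfl fun n₁ _ => sum_comm)

end Digits

section Valuation

variable {p : ℕ} [hp : Fact p.Prime]

theorem padicValNat_pow_mul_of_not_dvd (j : ℕ) {m : ℕ} (hm : ¬ p ∣ m) :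
    padicValNat p (p ^ j * m) = j := by
  have hm0 : m ≠ 0 := fun h => hm (h ▸ dvd_zero p)
  rw [padicValNat.mul (pow_ne_zero j hp.out.ne_zero) hm0, padicValNat.prime_pow,
    padicValNat.eq_zero_of_not_dvd hm, add_zero]

theorem image_pow_mul_filter_not_dvd (j N : ℕ) :
    ((Ioo 0 N).filter (¬ p ∣ ·)).image (p ^ j * ·)
      = (Ioo 0 (p ^ j * N)).filter (padicValNat p · = j) := by
  have hpj : 0 < p ^ j := pow_pos hp.out.pos j
  ext n
  simp only [mem_image, mem_filter, mem_Ioo]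
  constructor
  · rintro ⟨m, ⟨⟨hm0, hmN⟩, hpm⟩, rfl⟩
    exact ⟨⟨Nat.mul_pos hpj hm0, Nat.mul_lt_mul_of_pos_left hmN hpj⟩,
      padicValNat_pow_mul_of_not_dvd j hpm⟩
  · rintro ⟨⟨hn0, hnN⟩, rfl⟩
    obtain ⟨e, m, hpm, rfl⟩ := Nat.exists_eq_pow_mul_and_not_dvd hn0.ne' p hp.out.ne_one
    rw [padicValNat_pow_mul_of_not_dvd e hpm] at hnN ⊢
    exact ⟨m, ⟨⟨Nat.pos_of_mul_pos_left hn0, Nat.lt_of_mul_lt_mul_left hnN⟩, hpm⟩, rfl⟩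

theorem sum_Ioo_filter_padicValNat_eq {M : Type*} [AddCommMonoid M] (k : ℕ)
    (f : ℕ → ℕ → M) :
    ∑ n₂ ∈ Ioo 0 (p ^ k), ∑ n₁ ∈ (Ioo 0 n₂).filter (padicValNat p · = padicValNat p n₂), f n₁ n₂
      = ∑ j ∈ range k, ∑ m₂ ∈ (Ioo 0 (p ^ (k - j))).filter (¬ p ∣ ·),
          ∑ m₁ ∈ (Ioo 0 m₂).filter (¬ p ∣ ·), f (p ^ j * m₁) (p ^ j * m₂) := by
  have hinj : ∀ j, Function.Injective (p ^ j * ·) := fun j =>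
    mul_right_injective₀ (pow_ne_zero j hp.out.ne_zero)
  have hval : ∀ n ∈ Ioo 0 (p ^ k), padicValNat p n ∈ range k := fun n hn => by
    obtain ⟨hn0, hnk⟩ := mem_Ioo.mp hn
    exact mem_range.mpr <| (Nat.pow_lt_pow_iff_right hp.out.one_lt).mp <|
      (Nat.le_of_dvd hn0 pow_padicValNat_dvd).trans_lt hnk
  rw [← sum_fiberwise_of_maps_to hval]
  refine sum_congr rfl fun j hj => ?_
  rw [← pow_mul_pow_sub p (mem_range.mp hj).le, ← image_pow_mul_filter_not_dvd,
    sum_image (hinj j).injOn]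
  refine sum_congr rfl fun m₂ hm₂ => ?_
  rw [padicValNat_pow_mul_of_not_dvd j (mem_filter.mp hm₂).2, ← image_pow_mul_filter_not_dvd,
    sum_image (hinj j).injOn]

end Valuation

section PadicExpansion

variable {p : ℕ} [hp : Fact p.Prime]

variable (p) in
noncomputable def invPowSeries (s a n l : ℕ) : ℚ_[p] :=
  (negBinom s l : ℚ_[p]) * ((p : ℚ_[p]) * n) ^ l / (a : ℚ_[p]) ^ (s + l)

theorem Padic.norm_natCast_eq_one_of_not_dvd {a : ℕ} (ha : ¬ p ∣ a) : ‖(a : ℚ_[p])‖ = 1 :=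
  Padic.norm_natCast_eq_one_iff.mpr ((Nat.Prime.coprime_iff_not_dvd hp.out).mpr ha)

theorem Padic.norm_p_mul_natCast_le (n : ℕ) : ‖(p : ℚ_[p]) * n‖ ≤ ‖(p : ℚ_[p])‖ := by
  rw [norm_mul]
  exact mul_le_of_le_one_right (norm_nonneg _) (IsUltrametricDist.norm_natCast_le_one _ n)

theorem hasSum_invPowSeries (s : ℕ) {a : ℕ} (ha : ¬ p ∣ a) (n : ℕ) :
    HasSum (invPowSeries p s a n) ((((p * n + a : ℕ) : ℚ_[p])) ^ s)⁻¹ := by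
  have h : ‖(p : ℚ_[p]) * n‖ < ‖(a : ℚ_[p])‖ := by
    rw [Padic.norm_natCast_eq_one_of_not_dvd ha]
    exact (Padic.norm_p_mul_natCast_le n).trans_lt Padic.norm_p_lt_one
  push_cast
  rw [add_comm]
  exact hasSum_negBinom_mul_pow_div_pow s h

theorem summable_norm_invPowSeries (s : ℕ) {a : ℕ} (ha : ¬ p ∣ a) (n : ℕ) :
    Summable fun l => ‖invPowSeries p s a n l‖ :=
  .of_nonneg_of_le (fun _ => norm_nonneg _)
    (fun l =>
      (norm_negBinom_mul_pow_div_pow_le s l (Padic.norm_natCast_eq_one_of_not_dvd ha) _).trans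
        (pow_le_pow_left₀ (norm_nonneg _) (Padic.norm_p_mul_natCast_le n) l))
    (summable_geometric_of_lt_one (norm_nonneg _) Padic.norm_p_lt_one)

theorem hasSum_invPowSeries_mul (s₁ s₂ : ℕ) {a₁ a₂ : ℕ} (ha₁ : ¬ p ∣ a₁) (ha₂ : ¬ p ∣ a₂)
    (n₁ n₂ : ℕ) :
    HasSum (fun x : ℕ × ℕ => invPowSeries p s₁ a₁ n₁ x.1 * invPowSeries p s₂ a₂ n₂ x.2)
      (1 / (((p * n₁ + a₁ : ℕ) : ℚ_[p]) ^ s₁ * ((p * n₂ + a₂ : ℕ) : ℚ_[p]) ^ s₂)) := by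
  rw [one_div, mul_inv]
  exact (hasSum_invPowSeries s₁ ha₁ n₁).mul (hasSum_invPowSeries s₂ ha₂ n₂)
    (summable_mul_of_summable_norm (summable_norm_invPowSeries s₁ ha₁ n₁)
      (summable_norm_invPowSeries s₂ ha₂ n₂))

theorem sum_invPowSeries (s n l : ℕ) :
    ∑ a ∈ Ioo 0 p, invPowSeries p s a n l
      = negBinom s l * ((p : ℚ_[p]) * n) ^ l * H1 p p (s + l) := by
  simp only [H1, mul_sum, invPowSeries, mul_one_div]

theorem sum_sum_invPowSeries_mul (s₁ s₂ n l₁ l₂ : ℕ) :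
    ∑ a₂ ∈ Ioo 0 p, ∑ a₁ ∈ Ioo 0 a₂, invPowSeries p s₁ a₁ n l₁ * invPowSeries p s₂ a₂ n l₂
      = negBinom s₁ l₁ * negBinom s₂ l₂ * ((p : ℚ_[p]) * n) ^ (l₁ + l₂) *
          H2 p p (s₁ + l₁) (s₂ + l₂) := by
  simp only [H2, mul_sum, invPowSeries]
  refine sum_congr rfl fun a₂ _ => sum_congr rfl fun a₁ _ => ?_
  ring

variable (p) in
noncomputable def unitH2 (N s₁ s₂ : ℕ) : ℚ_[p] :=
  ∑ m₂ ∈ (Ioo 0 N).filter (¬ p ∣ ·), ∑ m₁ ∈ (Ioo 0 m₂).filter (¬ p ∣ ·),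
    1 / ((m₁ : ℚ_[p]) ^ s₁ * (m₂ : ℚ_[p]) ^ s₂)

variable (p) in
noncomputable def unitH2Series (s₁ s₂ M : ℕ) (x : ℕ × ℕ) : ℚ_[p] :=
  (p : ℚ_[p]) ^ (x.1 + x.2) * (negBinom s₁ x.1 : ℚ_[p]) * (negBinom s₂ x.2 : ℚ_[p]) *
    ((∑ n₂ ∈ range M, ∑ n₁ ∈ range n₂, (n₁ : ℚ_[p]) ^ x.1 * (n₂ : ℚ_[p]) ^ x.2) *
        H1 p p (s₁ + x.1) * H1 p p (s₂ + x.2) +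
      (∑ n ∈ range M, (n : ℚ_[p]) ^ (x.1 + x.2)) * H2 p p (s₁ + x.1) (s₂ + x.2))

theorem unitH2Series_eq_sum_invPowSeries (s₁ s₂ M : ℕ) (x : ℕ × ℕ) :
    unitH2Series p s₁ s₂ M x
      = ∑ n₂ ∈ range M,
          (∑ n₁ ∈ range n₂, ∑ a₁ ∈ Ioo 0 p, ∑ a₂ ∈ Ioo 0 p,
              invPowSeries p s₁ a₁ n₁ x.1 * invPowSeries p s₂ a₂ n₂ x.2
            + ∑ a₂ ∈ Ioo 0 p, ∑ a₁ ∈ Ioo 0 a₂,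
              invPowSeries p s₁ a₁ n₂ x.1 * invPowSeries p s₂ a₂ n₂ x.2) := by
  simp only [← sum_mul_sum, sum_invPowSeries, sum_sum_invPowSeries_mul]
  simp only [unitH2Series, mul_add, sum_add_distrib, sum_mul, mul_sum]
  congr 1 <;> refine sum_congr rfl fun n₂ _ => ?_
  · exact sum_congr rfl fun n₁ _ => by ring
  · ring

theorem hasSum_unitH2Series (s₁ s₂ M : ℕ) :
    HasSum (unitH2Series p s₁ s₂ M) (unitH2 p (p * M) s₁ s₂) := by
  have hunit : ∀ a ∈ Ioo 0 p, ¬ p ∣ a := fun a ha =>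
    Nat.not_dvd_of_pos_of_lt (mem_Ioo.mp ha).1 (mem_Ioo.mp ha).2
  rw [funext (unitH2Series_eq_sum_invPowSeries s₁ s₂ M), unitH2,
    sum_filter_not_dvd_Ioo_mul_sum_filter_not_dvd]
  refine hasSum_sum fun n₂ _ => .add ?_ ?_
  · exact hasSum_sum fun n₁ _ => hasSum_sum fun a₁ ha₁ => hasSum_sum fun a₂ ha₂ =>
      hasSum_invPowSeries_mul s₁ s₂ (hunit a₁ ha₁) (hunit a₂ ha₂) n₁ n₂
  · refine hasSum_sum fun a₂ ha₂ => hasSum_sum fun a₁ ha₁ =>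
      hasSum_invPowSeries_mul s₁ s₂ (hunit a₁ ?_) (hunit a₂ ha₂) n₂ n₂
    exact mem_Ioo.mpr ⟨(mem_Ioo.mp ha₁).1, (mem_Ioo.mp ha₁).2.trans (mem_Ioo.mp ha₂).2⟩

theorem unitH2Series_eq_sum_faulhaber (s₁ s₂ M : ℕ) (x : ℕ × ℕ) :
    unitH2Series p s₁ s₂ M x
      = ∑ u ∈ Icc 1 (x.1 + x.2 + 2), (M : ℚ_[p]) ^ u *
          ((p : ℚ_[p]) ^ (x.1 + x.2) * (negBinom s₁ x.1 : ℚ_[p]) * (negBinom s₂ x.2 : ℚ_[p]) *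
            ((faulhaberB2 u x.2 x.1 : ℚ_[p]) * H1 p p (s₁ + x.1) * H1 p p (s₂ + x.2) +
              (faulhaberB u (x.1 + x.2) : ℚ_[p]) * H2 p p (s₁ + x.1) (s₂ + x.2))) := by
  rw [unitH2Series, sum_range_sum_range_pow_mul_pow_eq_sum_faulhaberB2,
    sum_range_pow_eq_sum_faulhaberB M (L := x.1 + x.2 + 2) (by omega)]
  simp only [sum_mul, mul_sum, ← sum_add_distrib]
  exact sum_congr rfl fun u _ => by ring

end PadicExpansion

section EqualValuation

variable {p : ℕ} [hp : Fact p.Prime]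

theorem natCast_pow_ne_one {m : ℕ} (hm : m ≠ 0) : (p : ℚ_[p]) ^ m ≠ 1 := by
  rw [← Nat.cast_pow, Nat.cast_ne_one, Ne, Nat.pow_eq_one]
  exact fun h => h.elim hp.out.ne_one hm

theorem pow_mul_sum_equal_valuation_eq_sum_unitH2 (k s₁ s₂ : ℕ) :
    ((p : ℚ_[p]) ^ k) ^ (s₁ + s₂) *
        ∑ n₂ ∈ Ioo 0 (p ^ k),
          ∑ n₁ ∈ (Ioo 0 n₂).filter (fun n₁ => padicValNat p n₁ = padicValNat p n₂),
            1 / ((n₁ : ℚ_[p]) ^ s₁ * (n₂ : ℚ_[p]) ^ s₂)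
      = ∑ r ∈ range k, (p : ℚ_[p]) ^ ((r + 1) * (s₁ + s₂)) * unitH2 p (p ^ (r + 1)) s₁ s₂ := by
  rw [sum_Ioo_filter_padicValNat_eq, mul_sum, ← sum_range_reflect]
  refine sum_congr rfl fun r hr => ?_
  obtain ⟨j, hj⟩ : ∃ j, k = r + 1 + j := ⟨k - 1 - r, by have := mem_range.mp hr; omega⟩
  rw [show k - 1 - r = j by omega, show k - j = r + 1 by omega, hj, unitH2, mul_sum, mul_sum]
  refine sum_congr rfl fun m₂ _ => ?_
  rw [mul_sum, mul_sum]
  refine sum_congr rfl fun m₁ _ => ?_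
  have hp0 : (p : ℚ_[p]) ^ j ≠ 0 := pow_ne_zero j (Nat.cast_ne_zero.mpr hp.out.ne_zero)
  push_cast
  rw [mul_pow, mul_pow, show ((p : ℚ_[p]) ^ (r + 1 + j)) ^ (s₁ + s₂)
    = (p : ℚ_[p]) ^ ((r + 1) * (s₁ + s₂)) * ((p : ℚ_[p]) ^ j) ^ s₁ * ((p : ℚ_[p]) ^ j) ^ s₂ by ring]
  field_simp

theorem hasSum_depth_two_series (k s₁ s₂ : ℕ) :
    HasSum (fun x : ℕ × ℕ =>
        ∑ u ∈ Finset.Icc 1 (x.1 + x.2 + 2),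
          (((p : ℚ_[p]) ^ ((u + s₁ + s₂) * k) - 1) / ((p : ℚ_[p]) ^ (u + s₁ + s₂) - 1)) *
            (p : ℚ_[p]) ^ (x.1 + x.2) * (negBinom s₁ x.1 : ℚ_[p]) * (negBinom s₂ x.2 : ℚ_[p]) *
            ((faulhaberB2 u x.2 x.1 : ℚ_[p]) * H1 p p (s₁ + x.1) * H1 p p (s₂ + x.2) +
              (faulhaberB u (x.1 + x.2) : ℚ_[p]) * H2 p p (s₁ + x.1) (s₂ + x.2)))
      (∑ r ∈ range k, (p : ℚ_[p]) ^ (r * (s₁ + s₂)) * unitH2 p (p * p ^ r) s₁ s₂) := by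
  refine (hasSum_sum fun r (_ : r ∈ range k) =>
    (hasSum_unitH2Series s₁ s₂ (p ^ r)).mul_left ((p : ℚ_[p]) ^ (r * (s₁ + s₂)))).congr_fun
      fun x => ?_
  simp_rw [unitH2Series_eq_sum_faulhaber, mul_sum]
  rw [sum_comm]
  refine sum_congr rfl fun u hu => ?_
  have hu : 1 ≤ u := (mem_Icc.mp hu).1
  rw [pow_mul, ← geom_sum_eq (natCast_pow_ne_one (by omega)) k]
  simp only [sum_mul]
  refine sum_congr rfl fun r _ => ?_
  push_cast
  ring

end EqualValuation

theorem depth_two_equal_valuation_part_general (p : ℕ) [Fact p.Prime] (k s₁ s₂ : ℕ) :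
    Summable (fun x : ℕ × ℕ =>
        ∑ u ∈ Finset.Icc 1 (x.1 + x.2 + 2),
          (((p : ℚ_[p]) ^ ((u + s₁ + s₂) * k) - 1) / ((p : ℚ_[p]) ^ (u + s₁ + s₂) - 1)) *
            (p : ℚ_[p]) ^ (x.1 + x.2) * (negBinom s₁ x.1 : ℚ_[p]) * (negBinom s₂ x.2 : ℚ_[p]) *
            ((faulhaberB2 u x.2 x.1 : ℚ_[p]) * H1 p p (s₁ + x.1) * H1 p p (s₂ + x.2) +
              (faulhaberB u (x.1 + x.2) : ℚ_[p]) * H2 p p (s₁ + x.1) (s₂ + x.2))) ∧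
    ((p : ℚ_[p]) ^ k) ^ (s₁ + s₂) *
        (∑ n₂ ∈ Finset.Ioo 0 (p ^ k),
          ∑ n₁ ∈ (Finset.Ioo 0 n₂).filter (fun n₁ => padicValNat p n₁ = padicValNat p n₂),
            1 / ((n₁ : ℚ_[p]) ^ s₁ * (n₂ : ℚ_[p]) ^ s₂))
      = (p : ℚ_[p]) ^ (s₁ + s₂) *
          ∑' x : ℕ × ℕ,
            ∑ u ∈ Finset.Icc 1 (x.1 + x.2 + 2),
              (((p : ℚ_[p]) ^ ((u + s₁ + s₂) * k) - 1) / ((p : ℚ_[p]) ^ (u + s₁ + s₂) - 1)) *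
                (p : ℚ_[p]) ^ (x.1 + x.2) * (negBinom s₁ x.1 : ℚ_[p]) *
                (negBinom s₂ x.2 : ℚ_[p]) *
                ((faulhaberB2 u x.2 x.1 : ℚ_[p]) * H1 p p (s₁ + x.1) * H1 p p (s₂ + x.2) +
                  (faulhaberB u (x.1 + x.2) : ℚ_[p]) * H2 p p (s₁ + x.1) (s₂ + x.2)) := by
  have hseries := hasSum_depth_two_series (p := p) k s₁ s₂
  refine ⟨hseries.summable, ?_⟩
  rw [hseries.tsum_eq, pow_mul_sum_equal_valuation_eq_sum_unitH2, mul_sum]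
  refine sum_congr rfl fun r _ => ?_
  rw [← mul_assoc, ← pow_add, ← pow_succ', add_one_mul, add_comm (r * _)]

/-- The part `v_p(n_1) = v_p(n_2)` of the depth-two sum:
`(p^k)^{s_1+s_2}·∑_{0<n_1<n_2<p^k, v_p(n_1)=v_p(n_2)} n_1^{−s_1} n_2^{−s_2}
 = p^{s_1+s_2}·∑_{l_1,l_2≥0} ∑_{u=1}^{l_1+l_2+2} ((p^{(u+s_1+s_2)k}−1)/(p^{u+s_1+s_2}−1))·
   p^{l_1+l_2}·binom(−s_1,l_1)·binom(−s_2,l_2)·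
   (𝔹_u^{l_2,l_1}·H_p(s_1+l_1)·H_p(s_2+l_2) + 𝔹_u^{l_1+l_2}·H_p(s_2+l_2,s_1+l_1))`,
the family indexed by `(l_1,l_2)` being summable in `ℚ_p`. -/
theorem depth_two_equal_valuation_part (p : ℕ) [Fact p.Prime] (k s₁ s₂ : ℕ)
    (hk : 1 ≤ k) (hs₁ : 1 ≤ s₁) (hs₂ : 1 ≤ s₂) :
    Summable (fun x : ℕ × ℕ =>
        ∑ u ∈ Finset.Icc 1 (x.1 + x.2 + 2),
          (((p : ℚ_[p]) ^ ((u + s₁ + s₂) * k) - 1) / ((p : ℚ_[p]) ^ (u + s₁ + s₂) - 1)) *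
            (p : ℚ_[p]) ^ (x.1 + x.2) * (negBinom s₁ x.1 : ℚ_[p]) * (negBinom s₂ x.2 : ℚ_[p]) *
            ((faulhaberB2 u x.2 x.1 : ℚ_[p]) * H1 p p (s₁ + x.1) * H1 p p (s₂ + x.2) +
              (faulhaberB u (x.1 + x.2) : ℚ_[p]) * H2 p p (s₁ + x.1) (s₂ + x.2))) ∧
    ((p : ℚ_[p]) ^ k) ^ (s₁ + s₂) *
        (∑ n₂ ∈ Finset.Ioo 0 (p ^ k),
          ∑ n₁ ∈ (Finset.Ioo 0 n₂).filter (fun n₁ => padicValNat p n₁ = padicValNat p n₂),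
            1 / ((n₁ : ℚ_[p]) ^ s₁ * (n₂ : ℚ_[p]) ^ s₂))
      = (p : ℚ_[p]) ^ (s₁ + s₂) *
          ∑' x : ℕ × ℕ,
            ∑ u ∈ Finset.Icc 1 (x.1 + x.2 + 2),
              (((p : ℚ_[p]) ^ ((u + s₁ + s₂) * k) - 1) / ((p : ℚ_[p]) ^ (u + s₁ + s₂) - 1)) *
                (p : ℚ_[p]) ^ (x.1 + x.2) * (negBinom s₁ x.1 : ℚ_[p]) *
                (negBinom s₂ x.2 : ℚ_[p]) *
                ((faulhaberB2 u x.2 x.1 : ℚ_[p]) * H1 p p (s₁ + x.1) * H1 p p (s₂ + x.2) +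
                  (faulhaberB u (x.1 + x.2) : ℚ_[p]) * H2 p p (s₁ + x.1) (s₂ + x.2)) :=
  depth_two_equal_valuation_part_general p k s₁ s₂
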